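/- Let G be a finite group and p a prime divisor of the order of G. If every maximal subgroup of G is normal in G or has p'-order, then every Sylow p-subgroup of G is normal in G. -/

import Mathlib

theorem Sylow.normal_of_forall_isCoatom_le_normal {G : Type*} [Group G] [Finite G] {p : ℕ}
    [Fact p.Prime] (P : Sylow p G)
    (hmax : ∀ M : Subgroup G, IsCoatom M → (P : Subgroup G) ≤ M → M.Normal) :
    (P : Subgroup G).Normal := by
  rw [← Subgroup.normalizer_eq_top_iff]
  refine (eq_top_or_exists_le_coatom _).resolve_right ?_
  rintro ⟨M, hM, hNM⟩
  have hPM : (P : Subgroup G) ≤ M := Subgroup.le_normalizer.trans hNM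
  have : M.Normal := hmax M hM hPM
  -- Frattini's argument: `N_G(P) ⊔ M = G`, and `N_G(P) ≤ M`.
  exact hM.1 (sup_of_le_right hNM ▸ P.normalizer_sup_eq_top' hPM)

/-- If every maximal subgroup of a finite group `G` is normal or has `p'`-order
(for a fixed prime divisor `p` of `|G|`), then every Sylow `p`-subgroup of `G` is
normal. -/
theorem sylow_p_normal_of_maximal_normal_or_p'_order
    {G : Type*} [Group G] [Finite G] (p : ℕ) (hp : p.Prime)
    (hpG : p ∣ Nat.card G)
    (h : ∀ M : Subgroup G, IsCoatom M → M.Normal ∨ ¬ p ∣ Nat.card M) :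
    ∀ P : Sylow p G, (P : Subgroup G).Normal := by
  have : Fact p.Prime := ⟨hp⟩
  intro P
  refine P.normal_of_forall_isCoatom_le_normal fun M hM hPM => (h M hM).resolve_right ?_
  exact fun hpM => hpM ((P.dvd_card_of_dvd_card hpG).trans (Subgroup.card_dvd_of_le hPM))
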